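/- arXiv:1909.01667 — 7 statements merged into one kernel-verified Lean document; each statement's English description precedes it below -/
import Mathlib

section
/- Let (A, ≤) be a well-quasi order. Then the majoring ordering on finite subsets of A, defined by X ⊑ Y iff for every x ∈ X there exists y ∈ Y with x ≤ y, is a well-quasi order on the set of finite subsets of A. -/
/-- The majoring relation on finite subsets. -/
def MajF {A : Type*} (le : A → A → Prop) (X Y : Finset A) : Prop :=
  ∀ x ∈ X, ∃ y ∈ Y, le x y

/-- If `le` is a well-quasi order on `A`, then the majoring ordering is a
well-quasi order on finite subsets of `A`. -/
theorem stmt0 {A : Type*} (le : A → A → Prop)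
    (hrefl : ∀ a, le a a)
    (htrans : ∀ a b c, le a b → le b c → le a c)
    (hwqo : ∀ f : ℕ → A, ∃ i j, i < j ∧ le (f i) (f j)) :
    ∀ F : ℕ → Finset A, ∃ i j, i < j ∧ MajF le (F i) (F j) := by
  intro F
  haveI : IsRefl A le := ⟨hrefl⟩
  haveI : IsTrans A le := ⟨htrans⟩
  have hpwo : (Set.univ : Set A).PartiallyWellOrderedOn le := fun f => hwqo (fun n => (f n).1)
  haveI : IsPreorder A le := { refl := hrefl, trans := htrans }
  have hlists := hpwo.partiallyWellOrderedOn_sublistForall₂ (r := le)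
  obtain ⟨i, j, hij, hrel⟩ := hlists.exists_lt (f := fun n => (F n).toList)
    (fun n x _ => Set.mem_univ x)
  refine ⟨i, j, hij, fun x hx => ?_⟩
  obtain ⟨l, hforall, hsub⟩ := List.sublistForall₂_iff.1 hrel
  have hx' : x ∈ (F i).toList := Finset.mem_toList.2 hx
  obtain ⟨k, hk⟩ := List.get_of_mem hx'
  obtain ⟨hlen, hget⟩ := List.forall₂_iff_get.1 hforall
  refine ⟨l.get ⟨k, hlen ▸ k.isLt⟩, ?_, ?_⟩
  · exact Finset.mem_toList.1 (hsub.subset (l.get_mem _))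
  · have := hget k k.isLt
    rw [hk] at this; exact this _
end

section
/- The minoring ordering on the set of finite subsets of ℕ^d (with the componentwise product order on ℕ^d) is a well-quasi order: every infinite sequence X₀, X₁, X₂, … of finite subsets of ℕ^d contains indices i < j with Xᵢ ⊑ᵐⁱⁿ Xⱼ. -/
/-- The minoring relation on finite subsets of `ℕ^d` (componentwise order). -/
def MinF {d : ℕ} (X Y : Finset (Fin d → ℕ)) : Prop :=
  ∀ y ∈ Y, ∃ x ∈ X, x ≤ y

theorem MinF.refl {d : ℕ} (X : Finset (Fin d → ℕ)) : MinF X X :=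
  fun y hy => ⟨y, hy, le_rfl⟩

theorem MinF.trans {d : ℕ} {X Y Z : Finset (Fin d → ℕ)} (h1 : MinF X Y) (h2 : MinF Y Z) :
    MinF X Z := by
  intro z hz
  obtain ⟨y, hy, hyz⟩ := h2 z hz
  obtain ⟨x, hx, hxy⟩ := h1 y hy
  exact ⟨x, hx, hxy.trans hyz⟩

instance {d : ℕ} : IsRefl (Finset (Fin d → ℕ)) MinF := ⟨MinF.refl⟩
instance {d : ℕ} : IsTrans (Finset (Fin d → ℕ)) MinF := ⟨fun _ _ _ => MinF.trans⟩
instance {d : ℕ} : IsPreorder (Finset (Fin d → ℕ)) MinF where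
  refl := MinF.refl
  trans _ _ _ := MinF.trans

theorem MinF.of_subset {d : ℕ} {X Y : Finset (Fin d → ℕ)} (h : Y ⊆ X) : MinF X Y :=
  fun y hy => ⟨y, h hy, le_rfl⟩

/-- If `l₁` embeds into `l₂` (Higman style) and `l₂` is `r`-antitone
(later elements are `r`-below earlier ones), then the embedding can be taken
index-pointwise. -/
theorem sublistForall₂_get {α : Type*} {r : α → α → Prop}
    (htrans : ∀ a b c, r a b → r b c → r a c) :
    ∀ {l₁ l₂ : List α}, List.SublistForall₂ r l₁ l₂ →
      List.Pairwise (fun a b => r b a) l₂ →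
      ∀ i (h₁ : i < l₁.length) (h₂ : i < l₂.length), r (l₁.get ⟨i, h₁⟩) (l₂.get ⟨i, h₂⟩) := by
  intro l₁ l₂ h
  induction h with
  | nil => intro _ i h₁ h₂; simp at h₁
  | cons hab h ih =>
    intro hp i h₁ h₂
    match i with
    | 0 => exact hab
    | (n+1) => exact ih hp.of_cons n (Nat.lt_of_succ_lt_succ h₁) (Nat.lt_of_succ_lt_succ h₂)
  | @cons_right a l₁ l₂ h ih =>
    intro hp i h₁ h₂
    have hlen : l₁.length ≤ l₂.length := by
      obtain ⟨l, hf, hs⟩ := List.sublistForall₂_iff.1 h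
      exact (hf.length_eq ▸ hs.length_le)
    have hi2 : i < l₂.length := lt_of_lt_of_le h₁ hlen
    have hbase : r (l₁.get ⟨i, h₁⟩) (l₂.get ⟨i, hi2⟩) := ih hp.of_cons i h₁ hi2
    match i with
    | 0 =>
      have : r (l₂.get ⟨0, hi2⟩) a := by
        rcases List.pairwise_cons.1 hp with ⟨ha, _⟩
        exact ha _ (l₂.get_mem _)
      exact htrans _ _ _ hbase this
    | (n+1) =>
      have hpl₂ := hp.of_cons
      rw [List.pairwise_iff_get] at hpl₂
      have hn2 : n < l₂.length := Nat.lt_of_succ_lt hi2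
      have : r (l₂.get ⟨n+1, hi2⟩) (l₂.get ⟨n, hn2⟩) :=
        hpl₂ ⟨n, hn2⟩ ⟨n+1, hi2⟩ (Nat.lt_succ_self n)
      have : r (l₁.get ⟨n+1, h₁⟩) (l₂.get ⟨n, hn2⟩) := htrans _ _ _ hbase this
      simpa using this

theorem sublistForall₂_length_le {α : Type*} {r : α → α → Prop} {l₁ l₂ : List α}
    (h : List.SublistForall₂ r l₁ l₂) : l₁.length ≤ l₂.length := by
  obtain ⟨l, hf, hs⟩ := List.sublistForall₂_iff.1 h
  exact (hf.length_eq ▸ hs.length_le)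

/-- Slice of a finite subset of `ℕ^(d+1)`: tails of points with head `≤ n`. -/
def sliceF {d : ℕ} (X : Finset (Fin (d+1) → ℕ)) (n : ℕ) : Finset (Fin d → ℕ) :=
  (X.filter (fun x => x 0 ≤ n)).image Fin.tail

def limitF {d : ℕ} (X : Finset (Fin (d+1) → ℕ)) : Finset (Fin d → ℕ) :=
  X.image Fin.tail

theorem sliceF_subset_sliceF {d : ℕ} (X : Finset (Fin (d+1) → ℕ)) {n m : ℕ} (h : n ≤ m) :
    sliceF X n ⊆ sliceF X m :=
  Finset.image_subset_image (by
    intro x hx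
    rcases Finset.mem_filter.1 hx with ⟨h1, h2⟩
    exact Finset.mem_filter.2 ⟨h1, le_trans h2 h⟩)

theorem sliceF_subset_limitF {d : ℕ} (X : Finset (Fin (d+1) → ℕ)) (n : ℕ) :
    sliceF X n ⊆ limitF X :=
  Finset.image_subset_image (Finset.filter_subset _ _)

theorem sliceF_eq_limitF {d : ℕ} (X : Finset (Fin (d+1) → ℕ)) {n : ℕ}
    (h : X.sup (fun x => x 0) ≤ n) : sliceF X n = limitF X := by
  unfold sliceF limitF
  congr 1
  apply Finset.filter_true_of_mem
  intro x hx
  exact le_trans (Finset.le_sup (f := fun x => x 0) hx) h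

/-- If all slices are related, so are the original sets. -/
theorem minF_of_slices {d : ℕ} {X Y : Finset (Fin (d+1) → ℕ)}
    (h : ∀ n, MinF (sliceF X n) (sliceF Y n)) : MinF X Y := by
  intro y hy
  have hty : Fin.tail y ∈ sliceF Y (y 0) := by
    apply Finset.mem_image_of_mem
    exact Finset.mem_filter.2 ⟨hy, le_rfl⟩
  obtain ⟨t, ht, hle⟩ := h (y 0) (Fin.tail y) hty
  obtain ⟨x, hx, rfl⟩ := Finset.mem_image.1 ht
  rcases Finset.mem_filter.1 hx with ⟨hxX, hx0⟩
  refine ⟨x, hxX, ?_⟩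
  intro i
  refine Fin.cases ?_ ?_ i
  · exact hx0
  · intro i'
    exact hle i'

/-- The minoring ordering on finite subsets of `ℕ^d` is a well-quasi order:
every infinite sequence contains an increasing pair. -/
theorem stmt1 (d : ℕ) (F : ℕ → Finset (Fin d → ℕ)) :
    ∃ i j, i < j ∧ MinF (F i) (F j) := by
  induction d with
  | zero =>
    haveI : Subsingleton (Fin 0 → ℕ) := ⟨fun a b => funext fun i => i.elim0⟩
    haveI : Finite (Fin 0 → ℕ) := Finite.of_subsingleton
    obtain ⟨i, j, hne, heq⟩ := Finite.exists_ne_map_eq_of_infinite F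
    rcases hne.lt_or_gt with h | h
    · exact ⟨i, j, h, heq ▸ MinF.refl _⟩
    · exact ⟨j, i, h, heq ▸ MinF.refl _⟩
  | succ d IH =>
    have h1 : (Set.univ : Set (Finset (Fin d → ℕ))).PartiallyWellOrderedOn MinF :=
      Set.partiallyWellOrderedOn_iff_exists_lt.2 fun f _ => IH f
    -- extract a subsequence along which the limits are monotone
    obtain ⟨g, hg⟩ := h1.exists_monotone_subseq (f := fun k => limitF (F k)) (fun _ => Set.mem_univ _)
    -- Higman's lemma on the lists of proper slices
    have h2 := h1.partiallyWellOrderedOn_sublistForall₂ MinF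
    set L : ℕ → List (Finset (Fin d → ℕ)) :=
      fun k => (List.range ((F (g k)).sup (fun x => x 0))).map (sliceF (F (g k))) with hL
    obtain ⟨i, j, hij, hsub⟩ := h2.exists_lt (f := L) (fun k x _ => Set.mem_univ x)
    refine ⟨g i, g j, g.strictMono hij, ?_⟩
    set X := F (g i)
    set Y := F (g j)
    have hlim : MinF (limitF X) (limitF Y) := hg i j hij.le
    have hNlen : (F (g i)).sup (fun x => x 0) ≤ (F (g j)).sup (fun x => x 0) := by
      have := sublistForall₂_length_le hsub
      simpa [hL] using this
    have hpair : List.Pairwise (fun a b => MinF b a) (L j) :=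
      List.Pairwise.map _
        (fun a b (hab : a < b) => MinF.of_subset (sliceF_subset_sliceF _ hab.le))
        List.pairwise_lt_range
    apply minF_of_slices
    intro n
    by_cases hn : n < X.sup (fun x => x 0)
    · have hn' : n < Y.sup (fun x => x 0) := lt_of_lt_of_le hn hNlen
      have h₁ : n < (L i).length := by simpa [hL] using hn
      have h₂ : n < (L j).length := by simpa [hL] using hn'
      have := sublistForall₂_get (r := MinF) (fun _ _ _ => MinF.trans) hsub hpair n h₁ h₂
      have e₁ : (L i).get ⟨n, h₁⟩ = sliceF X n := by simp [hL]; rfl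
      have e₂ : (L j).get ⟨n, h₂⟩ = sliceF Y n := by simp [hL]; rfl
      rwa [e₁, e₂] at this
    · push_neg at hn
      rw [sliceF_eq_limitF X hn]
      exact MinF.trans hlim (MinF.of_subset (sliceF_subset_limitF Y n))
end

section
/- The map X ↦ min(ℕ^d ∖ ↓X) from finite subsets of ℕ^d to finite subsets of ℕ^d is order-reflecting from the minoring to the majoring order: if min(ℕ^d ∖ ↓X) ⊑ᵐⁱⁿ min(ℕ^d ∖ ↓Y) then X ⊑ᵐᵃʲ Y. -/
/-- The majoring relation on arbitrary subsets of `ℕ^d`. -/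
def MajS {d : ℕ} (X Y : Set (Fin d → ℕ)) : Prop :=
  ∀ x ∈ X, ∃ y ∈ Y, x ≤ y

/-- The minoring relation on arbitrary subsets of `ℕ^d`. -/
def MinS {d : ℕ} (X Y : Set (Fin d → ℕ)) : Prop :=
  ∀ y ∈ Y, ∃ x ∈ X, x ≤ y

/-- Downward closure of a subset of `ℕ^d`. -/
def downCl {d : ℕ} (X : Set (Fin d → ℕ)) : Set (Fin d → ℕ) :=
  {a | ∃ x ∈ X, a ≤ x}

/-- The set of minimal elements of a subset of `ℕ^d`. -/
def minSet {d : ℕ} (X : Set (Fin d → ℕ)) : Set (Fin d → ℕ) :=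
  {x ∈ X | ∀ x' ∈ X, x' ≤ x → x' = x}

lemma exists_minSet_le {d : ℕ} (S : Set (Fin d → ℕ)) (x : Fin d → ℕ) (hx : x ∈ S) :
    ∃ m ∈ minSet S, m ≤ x := by
  by_cases h : ∀ x' ∈ S, x' ≤ x → x' = x
  · exact ⟨x, ⟨hx, h⟩, le_refl x⟩
  · push_neg at h
    obtain ⟨x', hx', hle, hne⟩ := h
    have hsum : ∑ i, x' i < ∑ i, x i := by
      apply Finset.sum_lt_sum (fun i _ => hle i)
      by_contra hc
      push_neg at hc
      exact hne (funext fun i => le_antisymm (hle i) (hc i (Finset.mem_univ i)))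
    obtain ⟨m, hm, hmle⟩ := exists_minSet_le S x' hx'
    exact ⟨m, hm, hmle.trans hle⟩
termination_by ∑ i, x i

/-- The map `X ↦ min(ℕ^d ∖ ↓X)` reflects the minoring order into the majoring
order: if `min(ℕ^d ∖ ↓X) ⊑ᵐⁱⁿ min(ℕ^d ∖ ↓Y)` then `X ⊑ᵐᵃʲ Y`. -/
theorem stmt7 (d : ℕ) (X Y : Finset (Fin d → ℕ))
    (h : MinS (minSet (downCl (↑X : Set (Fin d → ℕ)))ᶜ)
              (minSet (downCl (↑Y : Set (Fin d → ℕ)))ᶜ)) :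
    MajS (↑X : Set (Fin d → ℕ)) (↑Y : Set (Fin d → ℕ)) := by
  intro x hx
  by_contra hc
  push_neg at hc
  have hxc : x ∈ (downCl (↑Y : Set (Fin d → ℕ)))ᶜ := by
    intro ⟨y, hy, hle⟩
    exact hc y hy hle
  obtain ⟨m, hm, hmle⟩ := exists_minSet_le _ x hxc
  obtain ⟨m', hm', hm'le⟩ := h m hm
  exact hm'.1 ⟨x, hx, hm'le.trans hmle⟩
end

section
/- Descent equation: for a normed wqo A and strictly increasing inflationary control function g, L_{A,g}(n) = max over x ∈ A with |x| ≤ n of (1 + L_{A/x, g}(g(n))), where A/x = {y ∈ A : x ≰ y} with the induced order and norm (and the max over the empty set is 0). -/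
/-- A finite sequence is bad when it contains no increasing pair. -/
def IsBadSeq {A : Type*} (le : A → A → Prop) {l : ℕ} (x : Fin l → A) : Prop :=
  ∀ i j : Fin l, i < j → ¬ le (x i) (x j)

/-- A finite sequence is `(g,n)`-controlled when `|xᵢ| ≤ gⁱ(n)` for all `i`. -/
def IsControlledSeq {A : Type*} (nrm : A → ℕ) (g : ℕ → ℕ) (n : ℕ) {l : ℕ}
    (x : Fin l → A) : Prop :=
  ∀ i : Fin l, nrm (x i) ≤ g^[(i : ℕ)] n

/-- The maximal length of a `(g,n)`-controlled bad sequence. -/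
noncomputable def LenFun {A : Type*} (le : A → A → Prop) (nrm : A → ℕ)
    (g : ℕ → ℕ) (n : ℕ) : ℕ :=
  sSup {l : ℕ | ∃ x : Fin l → A, IsBadSeq le x ∧ IsControlledSeq nrm g n x}

/-- Restriction of a bad controlled sequence is bad and controlled. -/
lemma restrict_mem {A : Type*} {le : A → A → Prop} {nrm : A → ℕ} {g : ℕ → ℕ} {n : ℕ}
    {i j : ℕ} (hij : i ≤ j) {x : Fin j → A} (hb : IsBadSeq le x)
    (hc : IsControlledSeq nrm g n x) :
    IsBadSeq le (fun k : Fin i => x (Fin.castLE hij k)) ∧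
    IsControlledSeq nrm g n (fun k : Fin i => x (Fin.castLE hij k)) := by
  constructor
  · intro a b hab
    exact hb _ _ (by simpa using hab)
  · intro a
    simpa using hc (Fin.castLE hij a)

lemma bad_bddAbove {A : Type*} (le : A → A → Prop) (nrm : A → ℕ)
    (hwqo : ∀ f : ℕ → A, ∃ i j, i < j ∧ le (f i) (f j))
    (hnorm : ∀ n : ℕ, {a : A | nrm a ≤ n}.Finite) (g : ℕ → ℕ) (n : ℕ) :
    BddAbove {l : ℕ | ∃ x : Fin l → A, IsBadSeq le x ∧ IsControlledSeq nrm g n x} := by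
  by_contra h
  rw [not_bddAbove_iff] at h
  have hne : ∀ i : ℕ, ∃ x : Fin i → A, IsBadSeq le x ∧ IsControlledSeq nrm g n x := by
    intro i
    obtain ⟨l, ⟨x, hb, hc⟩, hil⟩ := h i
    exact ⟨_, restrict_mem hil.le hb hc⟩
  let α : ℕ → Type _ := fun i => {x : Fin i → A // IsBadSeq le x ∧ IsControlledSeq nrm g n x}
  haveI : ∀ i, Nonempty (α i) := fun i => (hne i).elim fun x hx => ⟨⟨x, hx⟩⟩
  haveI : Subsingleton (Fin 0 → A) := ⟨fun a b => funext fun k => k.elim0⟩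
  haveI : Finite (α 0) := Finite.of_subsingleton
  let π : {i j : ℕ} → (hij : i ≤ j) → α j → α i := fun {i j} hij x =>
    ⟨fun k => x.1 (Fin.castLE hij k), restrict_mem hij x.2.1 x.2.2⟩
  have π_refl : ∀ ⦃i⦄ (a : α i), π rfl.le a = a := by
    intro i a
    apply Subtype.ext
    funext k
    exact congrArg a.1 (Fin.ext rfl)
  have π_trans : ∀ ⦃i j k⦄ (hij : i ≤ j) (hjk : j ≤ k) (a : α k),
      π hij (π hjk a) = π (hij.trans hjk) a := by
    intro i j k hij hjk a
    apply Subtype.ext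
    funext m
    exact congrArg a.1 (Fin.ext rfl)
  have hfin : ∀ i (a : α i), {b : α (i+1) | π (Nat.le_add_right i 1) b = a}.Finite := by
    intro i a
    apply Set.Finite.of_finite_image (f := fun b : α (i+1) => b.1 (Fin.last i))
    · apply Set.Finite.subset (hnorm (g^[i] n))
      rintro c ⟨b, _, rfl⟩
      simpa using b.2.2 (Fin.last i)
    · rintro b1 h1 b2 h2 hlast
      rw [Set.mem_setOf_eq] at h1 h2
      apply Subtype.ext
      funext k
      by_cases hk : (k : ℕ) < i
      · have e1 : b1.1 (Fin.castLE (Nat.le_add_right i 1) ⟨k, hk⟩) =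
            a.1 ⟨k, hk⟩ := by rw [← h1]
        have e2 : b2.1 (Fin.castLE (Nat.le_add_right i 1) ⟨k, hk⟩) =
            a.1 ⟨k, hk⟩ := by rw [← h2]
        have hkk : k = Fin.castLE (Nat.le_add_right i 1) ⟨k, hk⟩ := Fin.ext rfl
        rw [hkk, e1, e2]
      · have : k = Fin.last i := Fin.ext (by simp only [Fin.val_last]; omega)
        rw [this]; exact hlast
  obtain ⟨f, hf⟩ := exists_seq_forall_proj_of_forall_finite π π_refl π_trans hfin
  obtain ⟨i, j, hij, hle⟩ := hwqo (fun k => (f (k+1)).1 ⟨k, k.lt_succ_self⟩)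
  have key : ∀ k (hk : k < j + 1), (f (k+1)).1 ⟨k, k.lt_succ_self⟩ = (f (j+1)).1 ⟨k, hk⟩ := by
    intro k hk
    have := hf (show k + 1 ≤ j + 1 by omega)
    have := congrFun (congrArg Subtype.val this) ⟨k, k.lt_succ_self⟩
    rw [← this]
    exact congrArg (f (j+1)).1 (Fin.ext rfl)
  rw [key i (by omega), key j (by omega)] at hle
  exact (f (j+1)).2.1 ⟨i, by omega⟩ ⟨j, by omega⟩ (by simpa using hij) hle

lemma zero_mem_bad {A : Type*} (le : A → A → Prop) (nrm : A → ℕ) (g : ℕ → ℕ) (n : ℕ) :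
    0 ∈ {l : ℕ | ∃ x : Fin l → A, IsBadSeq le x ∧ IsControlledSeq nrm g n x} :=
  ⟨Fin.elim0, fun i => i.elim0, fun i => i.elim0⟩

/-- The descent equation:
`L_{A,g}(n) = max_{x ∈ A, |x| ≤ n} (1 + L_{A/x,g}(g(n)))`,
where the residual `A/x` is the sub-nwqo on `{y : A | ¬ x ≤ y}` and the
max over the empty set is `0`. -/
theorem stmt10 {A : Type*} (le : A → A → Prop) (nrm : A → ℕ)
    (hrefl : ∀ a, le a a) (htrans : ∀ a b c, le a b → le b c → le a c)
    (hwqo : ∀ f : ℕ → A, ∃ i j, i < j ∧ le (f i) (f j))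
    (hnorm : ∀ n : ℕ, {a : A | nrm a ≤ n}.Finite)
    (g : ℕ → ℕ) (hg : StrictMono g) (hginfl : ∀ m, m ≤ g m) (n : ℕ) :
    LenFun le nrm g n =
      sSup {m : ℕ | ∃ x : A, nrm x ≤ n ∧
        m = 1 + LenFun (fun y z : {y : A // ¬ le x y} => le y.1 z.1)
          (fun y => nrm y.1) g (g n)} := by
  classical
  set S := {l : ℕ | ∃ x : Fin l → A, IsBadSeq le x ∧ IsControlledSeq nrm g n x} with hS
  set T := {m : ℕ | ∃ x : A, nrm x ≤ n ∧
        m = 1 + LenFun (fun y z : {y : A // ¬ le x y} => le y.1 z.1)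
          (fun y => nrm y.1) g (g n)} with hT
  have bddS : BddAbove S := bad_bddAbove le nrm hwqo hnorm g n
  -- residual wqo properties
  have hwqo' : ∀ (x : A) (f : ℕ → {y : A // ¬ le x y}), ∃ i j, i < j ∧ le (f i).1 (f j).1 := by
    intro x f; exact hwqo (fun k => (f k).1)
  have hnorm' : ∀ (x : A) (m : ℕ), {a : {y : A // ¬ le x y} | nrm a.1 ≤ m}.Finite := by
    intro x m
    have : {a : {y : A // ¬ le x y} | nrm a.1 ≤ m} =
        Subtype.val ⁻¹' {a : A | nrm a ≤ m} := rfl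
    rw [this]
    exact Set.Finite.preimage (Set.injOn_of_injective Subtype.val_injective) (hnorm m)
  have bddS' : ∀ x : A, BddAbove {l : ℕ | ∃ y : Fin l → {y : A // ¬ le x y},
      IsBadSeq (fun y z => le y.1 z.1) y ∧ IsControlledSeq (fun y => nrm y.1) g (g n) y} :=
    fun x => bad_bddAbove _ _ (hwqo' x) (hnorm' x) g (g n)
  -- T ⊆ S
  have hTS : T ⊆ S := by
    rintro m ⟨x, hxn, rfl⟩
    set L := LenFun (fun y z : {y : A // ¬ le x y} => le y.1 z.1) (fun y => nrm y.1) g (g n)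
      with hL
    have hmem : L ∈ {l : ℕ | ∃ y : Fin l → {y : A // ¬ le x y},
          IsBadSeq (fun y z => le y.1 z.1) y ∧ IsControlledSeq (fun y => nrm y.1) g (g n) y} :=
      Nat.sSup_mem ⟨0, zero_mem_bad _ _ _ _⟩ (bddS' x)
    obtain ⟨y, hyb, hyc⟩ := hmem
    rw [Nat.add_comm 1 L]
    refine ⟨Fin.cases x (fun k => (y k).1), ?_, ?_⟩
    · intro i j hij hle2
      rcases Fin.eq_zero_or_eq_succ j with rfl | ⟨j', rfl⟩
      · exact absurd hij (Fin.not_lt_zero i)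
      rcases Fin.eq_zero_or_eq_succ i with rfl | ⟨i', rfl⟩
      · simp only [Fin.cases_zero, Fin.cases_succ] at hle2
        exact (y j').2 hle2
      · simp only [Fin.cases_succ] at hle2
        exact hyb i' j' (by simpa using hij) hle2
    · intro k
      rcases Fin.eq_zero_or_eq_succ k with rfl | ⟨k', rfl⟩
      · simpa using hxn
      · simp only [Fin.cases_succ]
        have := hyc k'
        simp only [Fin.val_succ, Function.iterate_succ_apply]
        exact this
  have bddT : BddAbove T := bddS.mono hTS
  apply le_antisymm
  · -- sSup S ≤ sSup T
    have hM : sSup S ∈ S := Nat.sSup_mem ⟨0, zero_mem_bad _ _ _ _⟩ bddS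
    rcases Nat.eq_zero_or_pos (sSup S) with h0 | hpos
    · rw [LenFun, ← hS, h0]; exact Nat.zero_le _
    obtain ⟨l, hl⟩ := Nat.exists_eq_succ_of_ne_zero hpos.ne'
    rw [hl] at hM
    obtain ⟨x, hxb, hxc⟩ := hM
    set x0 := x 0 with hx0
    have hx0n : nrm x0 ≤ n := by simpa using hxc 0
    have htail : l ∈ {l : ℕ | ∃ y : Fin l → {y : A // ¬ le x0 y},
        IsBadSeq (fun y z => le y.1 z.1) y ∧ IsControlledSeq (fun y => nrm y.1) g (g n) y} := by
      refine ⟨fun k => ⟨x k.succ, hxb 0 k.succ (Fin.succ_pos k)⟩, ?_, ?_⟩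
      · intro i j hij hle2
        exact hxb i.succ j.succ (by simpa using hij) hle2
      · intro k
        have := hxc k.succ
        simp only [Fin.val_succ, Function.iterate_succ_apply] at this
        exact this
    have h1 : l ≤ LenFun (fun y z : {y : A // ¬ le x0 y} => le y.1 z.1)
        (fun y => nrm y.1) g (g n) := le_csSup (bddS' x0) htail
    have h2 : 1 + LenFun (fun y z : {y : A // ¬ le x0 y} => le y.1 z.1)
        (fun y => nrm y.1) g (g n) ∈ T := ⟨x0, hx0n, rfl⟩
    calc LenFun le nrm g n = l + 1 := hl
      _ ≤ 1 + LenFun (fun y z : {y : A // ¬ le x0 y} => le y.1 z.1)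
          (fun y => nrm y.1) g (g n) := by omega
      _ ≤ sSup T := le_csSup bddT h2
  · rcases T.eq_empty_or_nonempty with hTe | hTne
    · rw [hTe]; simp [LenFun]
    · exact csSup_le_csSup bddS hTne hTS
end

section
/- Let X, Y be nonempty finite subsets of ℕ², and define comp(Z) = ℕ² ∖ ↑Z, S₁^Z = {x : infinitely many n have (x,n) ∈ comp(Z)}, S₂^Z = {x' : infinitely many n have (n,x') ∈ comp(Z)}, S₃^Z = {(x,x') ∈ comp(Z) : x ∉ S₁^Z, x' ∉ S₂^Z}. If S₁^X ⊑ᵐᵃʲ S₁^Y (as finite subsets of ℕ), S₂^X ⊑ᵐᵃʲ S₂^Y, and S₃^X ⊑ᵐᵃʲ S₃^Y (as finite subsets of ℕ²), then X ⊑ᵐⁱⁿ Y. -/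
/-- The majoring relation on subsets of an ordered type. -/
def MajO {A : Type*} [LE A] (X Y : Set A) : Prop :=
  ∀ x ∈ X, ∃ y ∈ Y, x ≤ y

/-- `comp X = ℕ² ∖ ↑X`, the complement of the upward closure of `X`. -/
def compS (X : Finset (ℕ × ℕ)) : Set (ℕ × ℕ) :=
  {p | ¬ ∃ x ∈ X, x ≤ p}

/-- First coordinates appearing with infinitely many partners in `comp X`. -/
def S1 (X : Finset (ℕ × ℕ)) : Set ℕ :=
  {a | {n | (a, n) ∈ compS X}.Infinite}

/-- Second coordinates appearing with infinitely many partners in `comp X`. -/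
def S2 (X : Finset (ℕ × ℕ)) : Set ℕ :=
  {b | {n | (n, b) ∈ compS X}.Infinite}

/-- Elements of `comp X` with no coordinate in `S1` or `S2`. -/
def S3 (X : Finset (ℕ × ℕ)) : Set (ℕ × ℕ) :=
  {p ∈ compS X | p.1 ∉ S1 X ∧ p.2 ∉ S2 X}

/-- If `S₁^X ⊑ᵐᵃʲ S₁^Y`, `S₂^X ⊑ᵐᵃʲ S₂^Y` and `S₃^X ⊑ᵐᵃʲ S₃^Y`, then
`X ⊑ᵐⁱⁿ Y`. -/
theorem stmt17 (X Y : Finset (ℕ × ℕ)) (hX : X.Nonempty) (hY : Y.Nonempty)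
    (h1 : MajO (S1 X) (S1 Y)) (h2 : MajO (S2 X) (S2 Y))
    (h3 : MajO (S3 X) (S3 Y)) :
    ∀ y ∈ Y, ∃ x ∈ X, x ≤ y := by
  intro y hy
  by_contra hc
  push_neg at hc
  have hyc : y ∈ compS X := by
    intro ⟨x, hx, hxy⟩
    exact absurd hxy (hc x hx)
  by_cases hs1 : y.1 ∈ S1 X
  · obtain ⟨a, ha, hle⟩ := h1 y.1 hs1
    obtain ⟨n, hn, hbn⟩ := ha.exists_gt y.2
    exact hn ⟨y, hy, hle, le_of_lt hbn⟩
  · by_cases hs2 : y.2 ∈ S2 X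
    · obtain ⟨b, hb, hle⟩ := h2 y.2 hs2
      obtain ⟨n, hn, han⟩ := hb.exists_gt y.1
      exact hn ⟨y, hy, le_of_lt han, hle⟩
    · obtain ⟨q, hq, hle⟩ := h3 y ⟨hyc, hs1, hs2⟩
      exact hq.1 ⟨y, hy, hle⟩
end

section
/- Pointwise-at-x ordering and leanness: let α, γ < ε₀ with Nα ≤ x (α is x-lean). Then α < γ if and only if α ⪯ₓ Pₓ(γ), where ⪯ₓ is the reflexive closure of the pointwise-at-x relation and Pₓ is the predecessor at x. -/
open Ordinal

/-- `ε₀`, the least fixed point of `α ↦ ω^α`. -/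
noncomputable def eps0 : Ordinal := Ordinal.nfp (fun a => omega0 ^ a) 0

/-- The pointwise-at-`x` ordering `≺ₓ`: the smallest transitive relation with
`α ≺ₓ α+1` and `λ(x) ≺ₓ λ` for limit `λ`, where `fs λ x = λ(x)` is the
fundamental sequence. -/
inductive PW (fs : Ordinal → ℕ → Ordinal) (x : ℕ) : Ordinal → Ordinal → Prop
  | succ (α : Ordinal) : PW fs x α (α + 1)
  | lim (l : Ordinal) (h : Order.IsSuccLimit l) : PW fs x (fs l x) l
  | trans {a b c : Ordinal} : PW fs x a b → PW fs x b c → PW fs x a c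

lemma eps0_fp : omega0 ^ eps0 = eps0 :=
  Ordinal.nfp_fp (isNormal_opow one_lt_omega0) 0

lemma opow_lt_eps0 {a : Ordinal} (h : a < eps0) : omega0 ^ a < eps0 := by
  conv_rhs => rw [← eps0_fp]
  exact (opow_lt_opow_iff_right one_lt_omega0).2 h

lemma self_lt_opow_eps0 {a : Ordinal} (h : a < eps0) : a < omega0 ^ a := by
  rcases lt_or_eq_of_le (right_le_opow a one_lt_omega0) with h' | h'
  · exact h'
  · have : eps0 ≤ a :=
      nfp_le_fp (isNormal_opow one_lt_omega0).strictMono.monotone (zero_le : (0 : Ordinal) ≤ a) h'.symm.le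
    exact absurd h (not_lt.2 this)

lemma add_lt_eps0 {a b : Ordinal} (ha : a < eps0) (hb : b < eps0) : a + b < eps0 := by
  have := principal_add_omega0_opow eps0 (a := a) (b := b)
  rw [eps0_fp] at this
  exact this ha hb

section N
variable (N : Ordinal → ℕ)
  (hNnat : ∀ m : ℕ, N m = m)
  (hN : ∀ α : Ordinal, α < eps0 →
      N α = ((Ordinal.CNF omega0 α).map fun p => max (N p.1) (N p.2)).foldr max 0)

include hN in
lemma Nrec {a : Ordinal} (h0 : a ≠ 0) (he : a < eps0) :
    N a = max (max (N (log omega0 a)) (N (a / omega0 ^ log omega0 a)))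
      (N (a % omega0 ^ log omega0 a)) := by
  have hmod : a % omega0 ^ log omega0 a < eps0 := lt_of_le_of_lt (mod_le _ _) he
  rw [hN a he, CNF.ne_zero h0, List.map_cons, List.foldr_cons, ← hN _ hmod]

include hN in
lemma Nlog_le {a : Ordinal} (h0 : a ≠ 0) (he : a < eps0) : N (log omega0 a) ≤ N a := by
  rw [Nrec N hN h0 he]
  exact le_max_of_le_left (le_max_left _ _)

include hN in
lemma Nmod_le {a : Ordinal} (h0 : a ≠ 0) (he : a < eps0) :
    N (a % omega0 ^ log omega0 a) ≤ N a := by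
  rw [Nrec N hN h0 he]
  exact le_max_right _ _

include hNnat hN in
lemma coeff_le {a : Ordinal} (h0 : a ≠ 0) (he : a < eps0) :
    a / omega0 ^ log omega0 a ≤ (N a : Ordinal) := by
  obtain ⟨n, hn⟩ := lt_omega0.1 (div_opow_log_lt a one_lt_omega0)
  have h1 : N (a / omega0 ^ log omega0 a) = n := by rw [hn, hNnat]
  have h2 : N (a / omega0 ^ log omega0 a) ≤ N a := by
    rw [Nrec N hN h0 he]
    exact le_max_of_le_left (le_max_right _ _)
  rw [hn]
  exact_mod_cast h1 ▸ h2

include hNnat hN in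
lemma N_tail : ∀ g : Ordinal, ∀ {r β : Ordinal}, omega0 ^ β ∣ g → r < omega0 ^ β →
    g + r < eps0 → N r ≤ N (g + r) := by
  intro g
  induction g using Ordinal.induction with
  | h g IH =>
    intro r β hdvd hr hlt
    rcases eq_or_ne g 0 with rfl | hg0
    · rw [zero_add]
    set e := log omega0 g with hedef
    set c := g / omega0 ^ e with hcdef
    set m := g % omega0 ^ e with hmdef
    have hβe : β ≤ e := by
      rw [hedef]
      exact (opow_le_iff_le_log one_lt_omega0 hg0).1 (le_of_dvd hg0 hdvd)
    have hm : m < omega0 ^ e := mod_lt _ (opow_ne_zero _ omega0_ne_zero)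
    have hr' : r < omega0 ^ e := hr.trans_le (opow_le_opow_right omega0_pos hβe)
    have hmr : m + r < omega0 ^ e := principal_add_omega0_opow e hm hr'
    have hg : omega0 ^ e * c + m = g := div_add_mod g _
    have hc0 : c ≠ 0 := by
      rw [hcdef]
      exact ((div_pos (opow_ne_zero _ omega0_ne_zero)).2 (opow_log_le_self _ hg0)).ne'
    have hsplit : g + r = omega0 ^ e * c + (m + r) := by rw [← hg, add_assoc]
    have hlog : log omega0 (g + r) = e := by
      have hlc : log omega0 c = 0 := log_eq_zero (lt_of_lt_of_le (div_opow_log_lt g one_lt_omega0) le_rfl)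
      rw [hsplit, log_opow_mul_add one_lt_omega0 hc0 hmr, hlc, add_zero]
    have hmodeq : (g + r) % omega0 ^ log omega0 (g + r) = m + r := by
      rw [hlog, hsplit, mul_add_mod_self, mod_eq_of_lt hmr]
    -- ω^β divides m
    have hdvdm : omega0 ^ β ∣ m := by
      have h1 : omega0 ^ β ∣ omega0 ^ e * c :=
        (opow_dvd_opow omega0 hβe).mul_right c
      obtain ⟨u, hu⟩ := h1
      obtain ⟨v, hv⟩ := hdvd
      have huv : u ≤ v := by
        have : omega0 ^ β * u ≤ omega0 ^ β * v := by
          rw [← hu, ← hv]; exact le_of_le_of_eq le_self_add hg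
        exact le_of_not_gt fun hvu => absurd this
          (not_le.2 ((mul_lt_mul_iff_right₀ (opow_pos β omega0_pos)).2 hvu))
      refine ⟨v - u, ?_⟩
      have : omega0 ^ e * c + m = omega0 ^ β * u + omega0 ^ β * (v - u) := by
        rw [← mul_add, Ordinal.add_sub_cancel_of_le huv, ← hv, hg]
      rw [hu] at this
      exact ((add_right_inj _).1 this)
    have hmlt : m < g := lt_of_lt_of_le hm (opow_log_le_self _ hg0)
    have hmre : m + r < eps0 :=
      lt_of_le_of_lt (add_le_add_left (le_of_lt hmlt) r) hlt
    have IHm : N r ≤ N (m + r) := IH m hmlt hdvdm hr hmre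
    have hgr0 : g + r ≠ 0 :=
      ne_of_gt (lt_of_lt_of_le (pos_iff_ne_zero.2 hg0) le_self_add)
    have h2 : N (m + r) ≤ N (g + r) := by
      have := Nmod_le N hN hgr0 hlt
      rwa [hmodeq] at this
    exact IHm.trans h2
end N

section FS
variable (fs : Ordinal → ℕ → Ordinal) (N : Ordinal → ℕ) (x : ℕ)
  (hfs1 : ∀ (γ β : Ordinal) (x : ℕ), (∃ δ, γ = omega0 ^ (β + 1) * δ) →
      fs (γ + omega0 ^ (β + 1)) x = γ + omega0 ^ β * (x + 1))
  (hfs2 : ∀ (γ l : Ordinal) (x : ℕ), Order.IsSuccLimit l →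
      (∃ δ, γ = omega0 ^ l * δ) →
      fs (γ + omega0 ^ l) x = γ + omega0 ^ (fs l x))
  (hNnat : ∀ m : ℕ, N m = m)
  (hN : ∀ α : Ordinal, α < eps0 →
      N α = ((Ordinal.CNF omega0 α).map fun p => max (N p.1) (N p.2)).foldr max 0)

include hfs1 hfs2 hNnat hN in
lemma FSmain : ∀ r : Ordinal, r < eps0 → Order.IsSuccLimit r →
    ∀ g : Ordinal, omega0 ^ (log omega0 r + 1) ∣ g → g + r < eps0 →
      g < fs (g + r) x ∧ fs (g + r) x < g + r ∧
        ∀ a, N a ≤ x → a < g + r → a < fs (g + r) x := by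
  intro r
  induction r using Ordinal.induction with
  | h r IH =>
    intro hre hrl g hdvd hgr
    have hr0 : r ≠ 0 := hrl.pos.ne'
    set e := log omega0 r with hedef
    set c := r / omega0 ^ e with hcdef
    set m := r % omega0 ^ e with hmdef
    have hm : m < omega0 ^ e := mod_lt _ (opow_ne_zero _ omega0_ne_zero)
    have hrsplit : omega0 ^ e * c + m = r := div_add_mod r _
    have hc0 : c ≠ 0 :=
      ((div_pos (opow_ne_zero _ omega0_ne_zero)).2 (opow_log_le_self _ hr0)).ne'
    rcases eq_or_ne m 0 with hm0 | hm0
    · -- r = ω^e * c, a pure power times a nonzero natural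
      obtain ⟨n, hn⟩ := lt_omega0.1 (div_opow_log_lt r one_lt_omega0)
      obtain ⟨k, rfl⟩ : ∃ k : ℕ, n = k + 1 := by
        rcases n with _ | k
        · exact absurd (by exact_mod_cast hn) hc0
        · exact ⟨k, rfl⟩
      have hrval : r = omega0 ^ e * (k : Ordinal) + omega0 ^ e := by
        have hn' : c = ((k + 1 : ℕ) : Ordinal) := hn
        rw [← hrsplit, hm0, add_zero, hn']
        push_cast
        rw [mul_add, mul_one]
      have hepos : (1 : Ordinal) ≤ e := by
        rw [hedef]
        have h1 : omega0 ^ (1 : Ordinal) ≤ r := by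
          rw [opow_one]; exact omega0_le_of_isSuccLimit hrl
        exact (opow_le_iff_le_log one_lt_omega0 hr0).1 h1
      have hee : e < eps0 := lt_of_le_of_lt (log_le_self _ _) hre
      set g' : Ordinal := g + omega0 ^ e * (k : Ordinal) with hg'def
      have hsplit : g + r = g' + omega0 ^ e := by rw [hg'def, hrval, add_assoc]
      have hgg' : g ≤ g' := le_self_add
      have hdvd' : ∀ β : Ordinal, β ≤ e → omega0 ^ β ∣ g' := by
        intro β hβ
        have h1 : omega0 ^ β ∣ g :=
          dvd_trans (opow_dvd_opow omega0 (hβ.trans le_self_add)) hdvd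
        have h2 : omega0 ^ β ∣ omega0 ^ e * (k : Ordinal) :=
          (opow_dvd_opow omega0 hβ).mul_right _
        exact dvd_add h1 h2
      -- common "no lean ordinal in the gap" argument
      have key : ∀ w : Ordinal, 0 < w →
          (∀ σ : Ordinal, σ ≠ 0 → w ≤ σ → σ < omega0 ^ e → N σ ≤ x → False) →
          ∀ a, N a ≤ x → a < g + r → a < g' + w := by
        intro w hw0 hbad a hNa ha
        by_contra hcon
        push_neg at hcon
        have hga' : g' ≤ a := le_trans le_self_add hcon
        have hσeq : g' + (a - g') = a := Ordinal.add_sub_cancel_of_le hga'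
        set σ := a - g' with hσdef
        have hlow : w ≤ σ := by
          have h := hcon
          rw [← hσeq] at h
          exact le_of_add_le_add_left h
        have hup : σ < omega0 ^ e := by
          have h := ha
          rw [hsplit, ← hσeq] at h
          exact lt_of_add_lt_add_left h
        have hσ0 : σ ≠ 0 := ne_of_gt (lt_of_lt_of_le hw0 hlow)
        have hσa : N σ ≤ N a := by
          have h := N_tail N hNnat hN g' (hdvd' e le_rfl) hup
            (by rw [hσeq]; exact lt_trans ha hgr)
          rwa [hσeq] at h
        exact hbad σ hσ0 hlow hup (le_trans hσa hNa)
      rcases zero_or_succ_or_isSuccLimit e with he0 | ⟨β, hβ⟩ | hel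
      · exact absurd (hepos.trans_eq he0) (by norm_num)
      · -- successor exponent
        rw [← add_one_eq_succ, eq_comm] at hβ
        have hfsval : fs (g' + omega0 ^ (β + 1)) x = g' + omega0 ^ β * ((x : Ordinal) + 1) :=
          hfs1 g' β x (by rw [← hβ]; exact hdvd' e le_rfl)
        have hsplit' : g + r = g' + omega0 ^ (β + 1) := by rw [hsplit, hβ]
        have hwpos : (0 : Ordinal) < omega0 ^ β * ((x : Ordinal) + 1) := by
          apply mul_pos (opow_pos β omega0_pos)
          exact_mod_cast Nat.succ_pos x
        refine ⟨?_, ?_, ?_⟩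
        · rw [hsplit', hfsval]
          exact lt_of_le_of_lt hgg' (lt_add_of_pos_right g' hwpos)
        · rw [hsplit', hfsval]
          apply add_lt_add_right
          calc omega0 ^ β * ((x : Ordinal) + 1) < omega0 ^ β * omega0 := by
                rw [mul_lt_mul_iff_right₀ (opow_pos β omega0_pos)]
                exact_mod_cast nat_lt_omega0 (x + 1)
            _ = omega0 ^ β * omega0 ^ (1:Ordinal) := by rw [opow_one]
            _ = omega0 ^ (β + 1) := (opow_add omega0 β 1).symm
        · intro a hNa ha
          rw [hsplit', hfsval]
          rw [hsplit'] at ha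
          refine key _ hwpos ?_ a hNa (by rw [hsplit']; exact ha)
          intro σ hσ0 hlow hup hNσ
          have hσe : σ < eps0 :=
            lt_of_lt_of_le hup (le_of_lt (lt_of_le_of_lt (opow_log_le_self _ hr0) hre))
          have hlogσ : log omega0 σ = β := by
            apply le_antisymm
            · have hupβ : σ < omega0 ^ (β + 1) := by rw [← hβ]; exact hup
              have h := (lt_opow_iff_log_lt one_lt_omega0 hσ0).1 hupβ
              rwa [add_one_eq_succ, Order.lt_succ_iff] at h
            · exact (opow_le_iff_le_log one_lt_omega0 hσ0).1
                (le_trans (le_mul_left _ (by exact_mod_cast Nat.succ_pos x)) hlow)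
          have h1 : ((x : Ordinal) + 1) ≤ σ / omega0 ^ β :=
            (le_div (opow_ne_zero _ omega0_ne_zero)).2 hlow
          have h2 : σ / omega0 ^ log omega0 σ ≤ (N σ : Ordinal) := coeff_le N hNnat hN hσ0 hσe
          rw [hlogσ] at h2
          have h3 : ((x : Ordinal) + 1) ≤ (N σ : Ordinal) := h1.trans h2
          have h4 : x + 1 ≤ N σ := by exact_mod_cast h3
          omega
      · -- limit exponent
        have her : e < r := lt_of_lt_of_le (self_lt_opow_eps0 hee) (opow_log_le_self _ hr0)
        have hIH := IH e her hee hel 0 (dvd_zero _) (by rw [zero_add]; exact hee)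
        rw [zero_add] at hIH
        obtain ⟨hfse0, hfselt, hfsekey⟩ := hIH
        have hfsval : fs (g' + omega0 ^ e) x = g' + omega0 ^ (fs e x) :=
          hfs2 g' e x hel (hdvd' e le_rfl)
        have hwpos : (0 : Ordinal) < omega0 ^ (fs e x) := opow_pos _ omega0_pos
        refine ⟨?_, ?_, ?_⟩
        · rw [hsplit, hfsval]
          exact lt_of_le_of_lt hgg' (lt_add_of_pos_right g' hwpos)
        · rw [hsplit, hfsval]
          exact add_lt_add_right ((opow_lt_opow_iff_right one_lt_omega0).2 hfselt) g'
        · intro a hNa ha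
          rw [hsplit, hfsval]
          refine key _ hwpos ?_ a hNa ha
          intro σ hσ0 hlow hup hNσ
          have hσe : σ < eps0 :=
            lt_of_lt_of_le hup (le_of_lt (lt_of_le_of_lt (opow_log_le_self _ hr0) hre))
          have hξe : log omega0 σ < e := (lt_opow_iff_log_lt one_lt_omega0 hσ0).1 hup
          have hξN : N (log omega0 σ) ≤ x := le_trans (Nlog_le N hN hσ0 hσe) hNσ
          have hξ : log omega0 σ < fs e x := hfsekey _ hξN hξe
          have h5 : σ < omega0 ^ (log omega0 σ + 1) := lt_opow_succ_log_self one_lt_omega0 σ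
          have h6 : omega0 ^ (log omega0 σ + 1) ≤ omega0 ^ (fs e x) := by
            apply opow_le_opow_right omega0_pos
            rw [add_one_eq_succ]
            exact Order.succ_le_of_lt hξ
          exact absurd hlow (not_le.2 (lt_of_lt_of_le h5 h6))
    · -- tail m nonzero: recurse into m
      have hml : Order.IsSuccLimit m := by
        have h := hrl
        rw [← hrsplit] at h
        rcases isSuccLimit_add_iff.1 h with h' | ⟨h1, h2⟩
        · exact h'
        · exact absurd h1 hm0
      have hmr : m < r := lt_of_lt_of_le hm (opow_log_le_self _ hr0)
      have hme : m < eps0 := hmr.trans hre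
      have hlm : log omega0 m + 1 ≤ e := by
        have h : log omega0 m < e := (lt_opow_iff_log_lt one_lt_omega0 hm0).1 hm
        rwa [add_one_eq_succ, Order.succ_le_iff]
      have hdvd2 : omega0 ^ (log omega0 m + 1) ∣ g + omega0 ^ e * c := by
        apply dvd_add
        · exact dvd_trans (opow_dvd_opow omega0 (hlm.trans le_self_add)) hdvd
        · exact (opow_dvd_opow omega0 hlm).mul_right c
      have hassoc : (g + omega0 ^ e * c) + m = g + r := by rw [add_assoc, hrsplit]
      have hIH := IH m hmr hme hml (g + omega0 ^ e * c) hdvd2 (by rw [hassoc]; exact hgr)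
      rw [hassoc] at hIH
      obtain ⟨h1, h2, h3⟩ := hIH
      exact ⟨lt_of_le_of_lt le_self_add h1, h2, h3⟩
end FS

universe u
section Main
variable (fs : Ordinal.{u} → ℕ → Ordinal) (P : Ordinal → ℕ → Ordinal) (N : Ordinal.{u} → ℕ) (x : ℕ)
  (hfs1 : ∀ (γ β : Ordinal) (x : ℕ), (∃ δ, γ = omega0 ^ (β + 1) * δ) →
      fs (γ + omega0 ^ (β + 1)) x = γ + omega0 ^ β * (x + 1))
  (hfs2 : ∀ (γ l : Ordinal) (x : ℕ), Order.IsSuccLimit l →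
      (∃ δ, γ = omega0 ^ l * δ) →
      fs (γ + omega0 ^ l) x = γ + omega0 ^ (fs l x))
  (hP1 : ∀ (α : Ordinal) (x : ℕ), P (α + 1) x = α)
  (hP2 : ∀ (l : Ordinal) (x : ℕ), Order.IsSuccLimit l → P l x = P (fs l x) x)
  (hNnat : ∀ m : ℕ, N m = m)
  (hN : ∀ α : Ordinal, α < eps0 →
      N α = ((Ordinal.CNF omega0 α).map fun p => max (N p.1) (N p.2)).foldr max 0)

include hfs1 hfs2 hNnat hN in
lemma fs_spec {l : Ordinal} (hle : l < eps0) (hll : Order.IsSuccLimit l) :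
    0 < fs l x ∧ fs l x < l ∧ ∀ a, N a ≤ x → a < l → a < fs l x := by
  have h := FSmain fs N x hfs1 hfs2 hNnat hN l hle hll 0 (dvd_zero _)
    (by rw [zero_add]; exact hle)
  rw [zero_add] at h
  exact h

include hfs1 hfs2 hNnat hN in
lemma PW_lt : ∀ {a b : Ordinal}, PW fs x a b → b < eps0 → a < b := by
  intro a b h
  induction h with
  | succ α => exact fun _ => lt_add_one α
  | lim l hl => exact fun hle => (fs_spec fs N x hfs1 hfs2 hNnat hN hle hl).2.1
  | trans h1 h2 ih1 ih2 =>
    intro hce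
    have hb := ih2 hce
    exact lt_trans (ih1 (hb.trans hce)) hb

include hfs1 hfs2 hP1 hP2 hNnat hN in
lemma P_spec : ∀ g : Ordinal, g ≠ 0 → g < eps0 → PW fs x (P g x) g := by
  intro g
  induction g using Ordinal.induction with
  | h g IH =>
    intro hg0 hge
    rcases zero_or_succ_or_isSuccLimit g with h0 | ⟨b, hb⟩ | hl
    · exact absurd h0 hg0
    · rw [← add_one_eq_succ, eq_comm] at hb
      rw [hb, hP1]
      exact PW.succ b
    · obtain ⟨hpos, hlt, _⟩ := fs_spec fs N x hfs1 hfs2 hNnat hN hge hl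
      rw [hP2 g x hl]
      exact PW.trans (IH (fs g x) hlt hpos.ne' (hlt.trans hge)) (PW.lim g hl)

include hfs1 hfs2 hP1 hP2 hNnat hN in
lemma forward {α : Ordinal} (hlean : N α ≤ x) :
    ∀ g : Ordinal, g ≠ 0 → g < eps0 → α < g → PW fs x α (P g x) ∨ α = P g x := by
  intro g
  induction g using Ordinal.induction with
  | h g IH =>
    intro hg0 hge hαg
    rcases zero_or_succ_or_isSuccLimit g with h0 | ⟨b, hb⟩ | hl
    · exact absurd h0 hg0
    · rw [← add_one_eq_succ] at hb
      subst hb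
      rw [hP1]
      have hle : α ≤ b := by
        have := hαg
        rw [add_one_eq_succ, Order.lt_succ_iff] at this
        exact this
      rcases lt_or_eq_of_le hle with hαb | rfl
      · have hb0 : b ≠ 0 := fun h => by subst h; exact absurd hαb (not_lt_of_ge (zero_le : (0 : Ordinal) ≤ α))
        have hbe : b < eps0 := lt_trans (lt_add_one b) hge
        have h1 := IH b (lt_add_one b) hb0 hbe hαb
        have h2 := P_spec fs P N x hfs1 hfs2 hP1 hP2 hNnat hN b hb0 hbe
        rcases h1 with h1 | h1
        · exact Or.inl (PW.trans h1 h2)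
        · exact Or.inl (h1 ▸ h2)
      · exact Or.inr rfl
    · obtain ⟨hpos, hlt, hkey⟩ := fs_spec fs N x hfs1 hfs2 hNnat hN hge hl
      rw [hP2 g x hl]
      exact IH (fs g x) hlt hpos.ne' (hlt.trans hge) (hkey α hlean hαg)
end Main


/-- Let `α, γ < ε₀` with `α` being `x`-lean (`Nα ≤ x`).  Then `α < γ` iff
`α ⪯ₓ Pₓ(γ)`.  Here `fs` is the standard assignment of fundamental sequences,
`P` the predecessor operation at `x`, and `N` the hereditary CNF norm, all
specified by their defining equations. -/
theorem stmt18 (fs : Ordinal → ℕ → Ordinal) (P : Ordinal → ℕ → Ordinal)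
    (N : Ordinal → ℕ)
    (hfs1 : ∀ (γ β : Ordinal) (x : ℕ), (∃ δ, γ = omega0 ^ (β + 1) * δ) →
      fs (γ + omega0 ^ (β + 1)) x = γ + omega0 ^ β * (x + 1))
    (hfs2 : ∀ (γ l : Ordinal) (x : ℕ), Order.IsSuccLimit l →
      (∃ δ, γ = omega0 ^ l * δ) →
      fs (γ + omega0 ^ l) x = γ + omega0 ^ (fs l x))
    (hP1 : ∀ (α : Ordinal) (x : ℕ), P (α + 1) x = α)
    (hP2 : ∀ (l : Ordinal) (x : ℕ), Order.IsSuccLimit l → P l x = P (fs l x) x)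
    (hNnat : ∀ m : ℕ, N m = m)
    (hN : ∀ α : Ordinal, α < eps0 →
      N α = ((Ordinal.CNF omega0 α).map fun p => max (N p.1) (N p.2)).foldr
        max 0)
    (x : ℕ) (α γ : Ordinal) (hα : α < eps0) (hγ : γ < eps0) (hγ0 : γ ≠ 0)
    (hlean : N α ≤ x) :
    α < γ ↔ (PW fs x α (P γ x) ∨ α = P γ x) := by
  constructor
  · exact forward fs P N x hfs1 hfs2 hP1 hP2 hNnat hN hlean γ hγ0 hγ
  · intro h
    have hPγ : P γ x < γ :=
      PW_lt fs N x hfs1 hfs2 hNnat hN (P_spec fs P N x hfs1 hfs2 hP1 hP2 hNnat hN γ hγ0 hγ) hγ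
    rcases h with h | h
    · exact lt_trans (PW_lt fs N x hfs1 hfs2 hNnat hN h (hPγ.trans hγ)) hPγ
    · exact h ▸ hPγ
end

section
/- If α ∈ CNF(ω^(ω^ω)) is k-lean (Nα ≤ k) with k, n > 0, and α' ∈ ∂_n(α), then α' is (2k + (k+1)n)-lean. -/
/-!
Ordinals `α < ω^(ω^ω)` are represented by their Cantor normal form: a list of
exponents `β < ω^ω`, each of which is in turn represented by a list of natural
numbers `p` (its own CNF exponents, `β = ω^{p₁} + … + ω^{p_k}`).  A natural
number coefficient is the multiplicity of a term in the list.
-/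

/-- `D_n(ω^(ω^p))`: for `p = 0` this is `n+1` (i.e. `n+1` copies of `ω^0`);
for `p = d ≥ 1` this is `ω^(ω^(d-1)·(d+1)n)`. -/
def Dtop (n p : ℕ) : List (List ℕ) :=
  if p = 0 then List.replicate (n + 1) [] else [List.replicate ((p + 1) * n) (p - 1)]

/-- The derivative `D_n(ω^β)` of a single CNF term
`ω^β = ω^(ω^{p₁} + … + ω^{p_k})`, namely
`⨁ᵢ (D_n(ω^(ω^{pᵢ})) ⊗ ⨂_{j≠i} ω^(ω^{pⱼ}))`; for `β = 0` this is
`D_n(1) = 0`. -/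
def DnTerm (n : ℕ) (β : List ℕ) : List (List ℕ) :=
  (List.range β.length).flatMap fun i =>
    (Dtop n (β.getD i 0)).map fun c => c ++ β.eraseIdx i

/-- The norm `N β` of an exponent `β = ω^{p₁} + … + ω^{p_k}`: the maximum of
the exponents `pᵢ` and of the coefficients (multiplicities) in strict form. -/
def norm1 (β : List ℕ) : ℕ :=
  β.foldr (fun p acc => max (max p (β.count p)) acc) 0

/-- The hereditary norm `N α` of `α = ω^{β₁} + … + ω^{β_m}`: the maximum of
the norms of the exponents `βᵢ` and of the coefficients (multiplicities) in
strict form. -/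
def norm2 (α : List (List ℕ)) : ℕ :=
  α.foldr (fun β acc => max (max (norm1 β) (α.count β)) acc) 0

lemma foldr_max_le {α : Type*} (f : α → ℕ) (l : List α) (m : ℕ) :
    l.foldr (fun a acc => max (f a) acc) 0 ≤ m ↔ ∀ a ∈ l, f a ≤ m := by
  induction l with
  | nil => simp
  | cons x xs ih => simp [max_le_iff, ih]

lemma norm1_le_iff {β : List ℕ} {m : ℕ} :
    norm1 β ≤ m ↔ ∀ p ∈ β, p ≤ m ∧ β.count p ≤ m := by
  have := foldr_max_le (fun p => max p (β.count p)) β m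
  simp only [max_le_iff] at this
  exact this

lemma norm2_le_iff {α : List (List ℕ)} {m : ℕ} :
    norm2 α ≤ m ↔ ∀ β ∈ α, norm1 β ≤ m ∧ α.count β ≤ m := by
  have := foldr_max_le (fun β => max (norm1 β) (α.count β)) α m
  simp only [max_le_iff] at this
  exact this

lemma count_le_of_norm1 {β : List ℕ} {k : ℕ} (h : norm1 β ≤ k) (q : ℕ) : β.count q ≤ k := by
  by_cases hq : q ∈ β
  · exact (norm1_le_iff.mp h q hq).2
  · simp [List.count_eq_zero_of_not_mem hq]

lemma count_eq_sum_range (β : List ℕ) (Q : ℕ) :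
    ((List.range β.length).map (fun j => if β.getD j 0 = Q then 1 else 0)).sum = β.count Q := by
  induction β with
  | nil => simp
  | cons x xs ih =>
    rw [List.length_cons, List.range_succ_eq_map, List.map_cons, List.map_map, List.sum_cons]
    have : (List.map ((fun j => if (x :: xs).getD j 0 = Q then 1 else 0) ∘ Nat.succ)
        (List.range xs.length)) = List.map (fun j => if xs.getD j 0 = Q then 1 else 0)
        (List.range xs.length) := by
      apply List.map_congr_left
      intro j _
      simp [Function.comp, List.getD_cons_succ]
    rw [this, ih, List.count_cons, List.getD_cons_zero]
    by_cases h : x = Q <;> simp [h, Nat.add_comm]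

lemma count_DnTerm_le {n k : ℕ} (hn : 0 < n) {β : List ℕ} (hβ : norm1 β ≤ k)
    (γ : List ℕ) : (DnTerm n β).count γ ≤ k * (n + 1) := by
  set Q : ℕ := if γ.length + 1 = β.length then 0 else γ.headD 0 + 1 with hQ
  rw [DnTerm, List.count_flatMap]
  have key : ∀ j ∈ List.range β.length,
      (List.count γ ∘ fun i => (Dtop n (β.getD i 0)).map fun c => c ++ β.eraseIdx i) j
        ≤ (n + 1) * (if β.getD j 0 = Q then 1 else 0) := by
    intro j hj
    rw [List.mem_range] at hj
    simp only [Function.comp]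
    have hlen : (β.eraseIdx j).length = β.length - 1 := by
      rw [List.length_eraseIdx]; simp [hj]
    rcases Nat.eq_zero_or_pos (β.getD j 0) with h0 | hpos
    · rw [h0, Dtop, if_pos rfl]
      rw [List.map_replicate, List.nil_append, List.count_replicate]
      by_cases he : β.eraseIdx j = γ
      · have hQ0 : Q = 0 := by
          have := congrArg List.length he
          rw [hlen] at this
          rw [hQ, if_pos (by omega)]
        simp [he, h0, hQ0]
      · simp [he]
    · set q := β.getD j 0 with hq
      have hq0 : ¬ (q = 0) := by omega
      rw [Dtop, if_neg hq0, List.map_cons, List.map_nil]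
      have hmpos : 1 ≤ (q + 1) * n := Nat.mul_pos (Nat.succ_pos q) hn
      by_cases he : List.replicate ((q + 1) * n) (q - 1) ++ β.eraseIdx j = γ
      · have hlenγ : γ.length = (q + 1) * n + (β.length - 1) := by
          rw [← he, List.length_append, List.length_replicate, hlen]
        have hQq : q = Q := by
          have hhead : γ.headD 0 = q - 1 := by
            rw [← he]
            have hm : (q + 1) * n = ((q + 1) * n - 1) + 1 := by omega
            rw [hm, List.replicate_succ, List.cons_append, List.headD_cons]
          have hcond : ¬ (γ.length + 1 = β.length) := by omega
          rw [hQ, if_neg hcond, hhead]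
          omega
        rw [if_pos hQq]
        calc List.count γ [List.replicate ((q + 1) * n) (q - 1) ++ β.eraseIdx j] ≤ 1 :=
              List.count_le_length
          _ ≤ (n + 1) * 1 := by omega
      · have h0 : List.count γ [List.replicate ((q + 1) * n) (q - 1) ++ β.eraseIdx j] = 0 := by
          rw [List.count_eq_zero]
          intro hmem
          exact he (List.mem_singleton.mp hmem).symm
        rw [h0]
        exact Nat.zero_le _
  refine le_trans (List.sum_le_sum key) ?_
  rw [List.sum_map_mul_left, count_eq_sum_range]
  calc (n + 1) * List.count Q β ≤ (n + 1) * k :=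
        Nat.mul_le_mul_left _ (count_le_of_norm1 hβ Q)
    _ = k * (n + 1) := Nat.mul_comm _ _

lemma norm1_mem_DnTerm {n k : ℕ} {β γ : List ℕ} (hβ : norm1 β ≤ k)
    (hγ : γ ∈ DnTerm n β) : norm1 γ ≤ (k + 1) * n + k := by
  rw [DnTerm, List.mem_flatMap] at hγ
  obtain ⟨j, hj, hγ⟩ := hγ
  rw [List.mem_range] at hj
  rw [List.mem_map] at hγ
  obtain ⟨c, hc, rfl⟩ := hγ
  set q := β.getD j 0 with hq
  have hqmem : q ∈ β := by
    rw [hq, List.getD_eq_getElem _ _ hj]; exact List.getElem_mem hj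
  have hqk : q ≤ k := (norm1_le_iff.mp hβ q hqmem).1
  have hsub : (β.eraseIdx j).Sublist β := List.eraseIdx_sublist β j
  have hclen : c.length ≤ (k + 1) * n ∧ ∀ p ∈ c, p ≤ k := by
    rw [Dtop] at hc
    split_ifs at hc with h
    · rw [List.eq_of_mem_replicate hc]
      simp
    · rw [List.mem_singleton] at hc
      subst hc
      refine ⟨?_, ?_⟩
      · rw [List.length_replicate]
        exact Nat.mul_le_mul_right n (by omega)
      · intro p hp
        rw [List.eq_of_mem_replicate hp]
        omega
  rw [norm1_le_iff]
  intro p hp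
  constructor
  · rcases List.mem_append.mp hp with h | h
    · exact le_trans (hclen.2 p h) (by omega)
    · exact le_trans (norm1_le_iff.mp hβ p (hsub.subset h)).1 (by omega)
  · rw [List.count_append]
    have h1 : c.count p ≤ (k + 1) * n := le_trans List.count_le_length hclen.1
    have h2 : (β.eraseIdx j).count p ≤ k :=
      le_trans (hsub.count_le p) (count_le_of_norm1 hβ p)
    omega

/-- If `α ∈ CNF(ω^(ω^ω))` is `k`-lean with `k, n > 0`, then every element
`α' = D_n(ω^{βᵢ}) ⊕ ⨁_{j≠i} ω^{βⱼ}` of `∂_n(α)` is `(2k + (k+1)n)`-lean. -/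
theorem stmt19 (k n : ℕ) (hk : 0 < k) (hn : 0 < n) (α : List (List ℕ))
    (hα : norm2 α ≤ k) (i : ℕ) (hi : i < α.length) :
    norm2 (DnTerm n (α.getD i []) ++ α.eraseIdx i) ≤ 2 * k + (k + 1) * n := by
  set β := α.getD i [] with hβdef
  have hβmem : β ∈ α := by
    rw [hβdef, List.getD_eq_getElem _ _ hi]; exact List.getElem_mem hi
  have hβ : norm1 β ≤ k := (norm2_le_iff.mp hα β hβmem).1
  rw [norm2_le_iff]
  intro γ hγ
  have hcount : List.count γ (DnTerm n β ++ α.eraseIdx i) ≤ 2 * k + (k + 1) * n := by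
    rw [List.count_append]
    have h1 := count_DnTerm_le hn hβ γ
    have h2 : (α.eraseIdx i).count γ ≤ k := by
      refine le_trans ((List.eraseIdx_sublist α i).count_le γ) ?_
      by_cases hγα : γ ∈ α
      · exact (norm2_le_iff.mp hα γ hγα).2
      · simp [List.count_eq_zero_of_not_mem hγα]
    nlinarith
  refine ⟨?_, hcount⟩
  rcases List.mem_append.mp hγ with h | h
  · exact le_trans (norm1_mem_DnTerm hβ h) (by nlinarith)
  · have := (norm2_le_iff.mp hα γ ((List.eraseIdx_sublist α i).subset h)).1
    omega
end
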